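/- Let λ > 1, I = (−1,1), and I_λ = (−λ,λ). For every polynomial g of degree at most p, one has ∫_{I_λ \ [−1,1]} g(t)² dt ≤ (1/2)[(λ + √(λ²−1))^{2p+1} − 1] · ∫_{−1}^{1} g(t)² dt. -/

import Mathlib

/-!
Expanding `g` in Legendre polynomials `Pₖ`, orthogonality and Cauchy–Schwarz give
`g(t)² ≤ ‖g‖²_{L²(-1,1)} · ∑_{k ≤ p} (2k+1)/2 · Pₖ(t)²` for every real `t`. Write `t ≥ 1` as
`t = (s + s⁻¹)/2` with `s = t + √(t² - 1) ≥ 1`: the formula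
`Pₙ(t) = ∑ C(n,k)² ((t-1)/2)ᵏ ((t+1)/2)ⁿ⁻ᵏ` gives `0 ≤ Pₙ(t) ≤ sⁿ`, and after this substitution the
kernel times `dt` is at most `(2p+1)/4 · s²ᵖ ds` by a telescoping sum, which integrates over
`(1, λ + √(λ² - 1))` to a quarter of the constant `(λ + √(λ² - 1))²ᵖ⁺¹ - 1`. Reflecting `g`
gives the same bound on `(-λ, -1)`.
-/

open Polynomial Finset intervalIntegral
open scoped Nat

-- Mathlib's `Polynomial.shiftedLegendre` is the integer family orthogonal on `[0, 1]`.
noncomputable def legendre (n : ℕ) : ℝ[X] :=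
  C (2 ^ n * n ! : ℝ)⁻¹ * derivative^[n] ((X ^ 2 - 1) ^ n)

theorem choose_mul_descFactorial_mul_descFactorial {n k : ℕ} (hk : k ≤ n) :
    n.choose k * n.descFactorial (n - k) * n.descFactorial k = n ! * n.choose k ^ 2 := by
  rw [Nat.descFactorial_eq_factorial_mul_choose, Nat.descFactorial_eq_factorial_mul_choose,
    Nat.choose_symm hk, ← Nat.choose_mul_factorial_mul_factorial hk]
  ring

theorem iterate_derivative_eq_C_of_natDegree_le {R : Type*} [Semiring R] {p : R[X]} {n : ℕ}
    (hp : p.natDegree ≤ n) : derivative^[n] p = C ((n ! : R) * p.coeff n) := by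
  rw [eq_C_of_natDegree_le_zero ((natDegree_iterate_derivative p n).trans (by omega)),
    coeff_iterate_derivative, zero_add, Nat.descFactorial_self, nsmul_eq_mul]

section XSqSubOnePow

variable {R : Type*} [CommRing R]

theorem X_sq_sub_one_pow_eq_mul (n : ℕ) :
    ((X : R[X]) ^ 2 - 1) ^ n = (X - C 1) ^ n * (X - C (-1)) ^ n := by
  rw [← mul_pow]
  simp only [map_one, map_neg]
  ring

theorem iterate_derivative_X_sq_sub_one_pow (n : ℕ) :
    derivative^[n] (((X : R[X]) ^ 2 - 1) ^ n) =
      ∑ k ∈ range (n + 1),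
        (n ! * n.choose k ^ 2) • ((X - C 1) ^ k * (X - C (-1)) ^ (n - k)) := by
  rw [X_sq_sub_one_pow_eq_mul, iterate_derivative_mul]
  refine sum_congr rfl fun k hk => ?_
  have hk : k ≤ n := Nat.lt_succ_iff.mp (mem_range.mp hk)
  rw [iterate_derivative_X_sub_pow, iterate_derivative_X_sub_pow, smul_mul_smul_comm, smul_smul,
    Nat.sub_sub_self hk, ← mul_assoc, choose_mul_descFactorial_mul_descFactorial hk]

theorem monic_X_sq_sub_one : ((X : R[X]) ^ 2 - 1).Monic := by
  simpa using monic_X_pow_sub_C (1 : R) two_ne_zero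

theorem natDegree_X_sq_sub_one_pow [Nontrivial R] (n : ℕ) :
    (((X : R[X]) ^ 2 - 1) ^ n).natDegree = 2 * n := by
  rw [monic_X_sq_sub_one.natDegree_pow, ← C_1, natDegree_X_pow_sub_C, mul_comm]

theorem coeff_X_sq_sub_one_pow_two_mul [Nontrivial R] (n : ℕ) :
    (((X : R[X]) ^ 2 - 1) ^ n).coeff (2 * n) = 1 := by
  rw [← natDegree_X_sq_sub_one_pow (R := R) n]
  exact monic_X_sq_sub_one.pow n

theorem eval_iterate_derivative_X_sq_sub_one_pow {n j : ℕ} (hj : j < n) {x : R}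
    (hx : x ^ 2 = 1) : (derivative^[j] (((X : R[X]) ^ 2 - 1) ^ n)).eval x = 0 := by
  refine eval_eq_zero_of_dvd_of_eval_eq_zero (pow_sub_dvd_iterate_derivative_pow _ n j) ?_
  rw [eval_pow, eval_sub, eval_pow, eval_X, eval_one, hx, sub_self, zero_pow (by omega)]

end XSqSubOnePow

theorem eval_legendre (n : ℕ) (t : ℝ) :
    (legendre n).eval t =
      ∑ k ∈ range (n + 1),
        (n.choose k : ℝ) ^ 2 * (((t - 1) / 2) ^ k * ((t + 1) / 2) ^ (n - k)) := by
  rw [legendre, eval_mul, eval_C, iterate_derivative_X_sq_sub_one_pow, eval_finsetSum, mul_sum]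
  refine sum_congr rfl fun k hk => ?_
  have hk : k ≤ n := Nat.lt_succ_iff.mp (mem_range.mp hk)
  have h2 : (2 : ℝ) ^ n = 2 ^ k * 2 ^ (n - k) := by rw [← pow_add, Nat.add_sub_cancel' hk]
  rw [eval_smul, nsmul_eq_mul]
  simp only [eval_mul, eval_pow, eval_sub, eval_X, eval_C]
  rw [div_pow, div_pow, h2]
  push_cast
  field_simp
  ring

theorem coeff_legendre_self (n : ℕ) :
    (legendre n).coeff n = (2 ^ n * n ! : ℝ)⁻¹ * (2 * n).descFactorial n := by
  rw [legendre, coeff_C_mul, coeff_iterate_derivative, ← two_mul, coeff_X_sq_sub_one_pow_two_mul,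
    nsmul_one]

theorem natDegree_legendre_le (n : ℕ) : (legendre n).natDegree ≤ n := by
  refine (natDegree_C_mul_le _ _).trans ((natDegree_iterate_derivative _ _).trans ?_)
  rw [natDegree_X_sq_sub_one_pow]
  omega

theorem degree_legendre (n : ℕ) : (legendre n).degree = n := by
  refine degree_eq_of_le_of_coeff_ne_zero (degree_le_of_natDegree_le (natDegree_legendre_le n)) ?_
  rw [coeff_legendre_self]
  have : 0 < (2 * n).descFactorial n := Nat.descFactorial_pos.mpr (by omega)
  positivity

theorem integral_derivative_mul_eq_neg {a b : ℝ} {A : ℝ[X]} (ha : A.eval a = 0)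
    (hb : A.eval b = 0) (B : ℝ[X]) :
    ∫ x in a..b, (derivative A).eval x * B.eval x =
      -∫ x in a..b, A.eval x * (derivative B).eval x := by
  have h := integral_mul_deriv_eq_deriv_mul (fun x _ => A.hasDerivAt x)
    (fun x _ => B.hasDerivAt x) ((derivative A).continuous.intervalIntegrable a b)
    ((derivative B).continuous.intervalIntegrable a b)
  rw [ha, hb, zero_mul, zero_mul, sub_zero, zero_sub] at h
  linarith

theorem integral_iterate_derivative_mul {a b : ℝ} (n : ℕ) {W : ℝ[X]}
    (hW : ∀ j < n, (derivative^[j] W).eval a = 0 ∧ (derivative^[j] W).eval b = 0) (q : ℝ[X]) :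
    ∫ x in a..b, (derivative^[n] W).eval x * q.eval x =
      (-1) ^ n * ∫ x in a..b, W.eval x * (derivative^[n] q).eval x := by
  induction n generalizing q with
  | zero => simp
  | succ n ih =>
    obtain ⟨ha, hb⟩ := hW n n.lt_succ_self
    rw [Function.iterate_succ_apply', integral_derivative_mul_eq_neg ha hb,
      ih (fun j hj => hW j (hj.trans n.lt_succ_self)), Function.iterate_succ_apply]
    ring

theorem integral_one_sub_sq_pow (n : ℕ) :
    ∫ x in (-1 : ℝ)..1, (1 - x ^ 2) ^ n = 2 ^ (2 * n + 1) * (n ! : ℝ) ^ 2 / (2 * n + 1)! := by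
  induction n with
  | zero => norm_num
  | succ n ih =>
    have hderiv : ∀ x : ℝ, HasDerivAt (fun x => x * (1 - x ^ 2) ^ (n + 1))
        ((2 * n + 3) * (1 - x ^ 2) ^ (n + 1) - (2 * n + 2) * (1 - x ^ 2) ^ n) x := by
      intro x
      refine ((hasDerivAt_id' x).mul
        (((hasDerivAt_pow 2 x).const_sub 1).pow (n + 1))).congr_deriv ?_
      simp only [Pi.pow_apply, Nat.add_sub_cancel]
      push_cast
      ring
    have hint : ∀ m : ℕ,
        IntervalIntegrable (fun x : ℝ => (1 - x ^ 2) ^ m) MeasureTheory.volume (-1) 1 :=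
      fun m => Continuous.intervalIntegrable (by fun_prop) _ _
    have hftc := integral_eq_sub_of_hasDerivAt (fun x _ => hderiv x)
      (((hint (n + 1)).const_mul _).sub ((hint n).const_mul _))
    rw [integral_sub ((hint (n + 1)).const_mul _) ((hint n).const_mul _), integral_const_mul,
      integral_const_mul, ih] at hftc
    norm_num at hftc
    have hF : ((2 * n + 1)! : ℝ) ≠ 0 := by positivity
    rw [show 2 * (n + 1) + 1 = 2 * n + 1 + 1 + 1 by ring, Nat.factorial_succ (2 * n + 1 + 1),
      Nat.factorial_succ (2 * n + 1), Nat.factorial_succ n]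
    push_cast
    field_simp at hftc ⊢
    linear_combination (2 * (n : ℝ) + 2) * hftc

theorem integral_legendre_mul (n : ℕ) (q : ℝ[X]) :
    ∫ x in (-1 : ℝ)..1, (legendre n).eval x * q.eval x =
      (2 ^ n * n ! : ℝ)⁻¹ *
        ∫ x in (-1 : ℝ)..1, (1 - x ^ 2) ^ n * (derivative^[n] q).eval x := by
  have hW : ∀ j < n, (derivative^[j] (((X : ℝ[X]) ^ 2 - 1) ^ n)).eval (-1) = 0 ∧
      (derivative^[j] (((X : ℝ[X]) ^ 2 - 1) ^ n)).eval 1 = 0 := fun j hj =>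
    ⟨eval_iterate_derivative_X_sq_sub_one_pow hj (by norm_num),
      eval_iterate_derivative_X_sq_sub_one_pow hj (by norm_num)⟩
  simp only [legendre, eval_mul, eval_C, mul_assoc]
  rw [integral_const_mul, integral_iterate_derivative_mul n hW, ← integral_const_mul]
  congr 1
  refine integral_congr fun x _ => ?_
  simp only [eval_pow, eval_sub, eval_X, eval_one]
  rw [← mul_assoc, ← mul_pow]
  ring_nf

theorem integral_legendre_mul_eq_zero {n : ℕ} {q : ℝ[X]} (hq : q.natDegree < n) :
    ∫ x in (-1 : ℝ)..1, (legendre n).eval x * q.eval x = 0 := by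
  simp [integral_legendre_mul, iterate_derivative_eq_zero hq]

theorem integral_legendre_mul_self (n : ℕ) :
    ∫ x in (-1 : ℝ)..1, (legendre n).eval x * (legendre n).eval x = 2 / (2 * n + 1) := by
  rw [integral_legendre_mul, iterate_derivative_eq_C_of_natDegree_le (natDegree_legendre_le n),
    coeff_legendre_self]
  simp only [eval_C]
  rw [integral_mul_const, integral_one_sub_sq_pow]
  have hd := Nat.factorial_mul_descFactorial (show n ≤ 2 * n by omega)
  rw [show 2 * n - n = n by omega] at hd
  have hF : ((2 * n + 1)! : ℝ) = (2 * n + 1) * (2 * n)! := by push_cast [Nat.factorial_succ]; ring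
  have hD : ((2 * n).descFactorial n : ℝ) ≠ 0 := by
    exact_mod_cast (Nat.descFactorial_pos.mpr (by omega)).ne'
  rw [hF, ← hd]
  push_cast
  field_simp
  ring

theorem integral_legendre_mul_legendre (j k : ℕ) :
    ∫ x in (-1 : ℝ)..1, (legendre j).eval x * (legendre k).eval x =
      if j = k then (2 : ℝ) / (2 * k + 1) else 0 := by
  split_ifs with h
  · rw [h, integral_legendre_mul_self]
  rcases Nat.lt_or_gt_of_ne h with h | h
  · simp_rw [mul_comm ((legendre j).eval _)]
    exact integral_legendre_mul_eq_zero ((natDegree_legendre_le j).trans_lt h)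
  · exact integral_legendre_mul_eq_zero ((natDegree_legendre_le k).trans_lt h)

theorem exists_eq_sum_smul_legendre {p : ℕ} {g : ℝ[X]} (hg : g.natDegree ≤ p) :
    ∃ c : ℕ → ℝ, g = ∑ k ∈ range (p + 1), c k • legendre k := by
  let S : Polynomial.Sequence ℝ := ⟨legendre, degree_legendre⟩
  have hmem : g ∈ Submodule.span ℝ (S '' Set.Iio (p + 1)) := by
    rw [S.span_degreeLT fun i _ => (leadingCoeff_ne_zero.mpr (S.ne_zero i)).isUnit, mem_degreeLT]
    exact (degree_le_of_natDegree_le hg).trans_lt (by exact_mod_cast p.lt_succ_self)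
  obtain ⟨l, hl, rfl⟩ := (Finsupp.mem_span_image_iff_linearCombination ℝ).mp hmem
  refine ⟨l, ?_⟩
  rw [Finsupp.linearCombination_apply, Finsupp.sum_of_support_subset l (s := range (p + 1)) ?_
    (fun k a => a • legendre k) fun _ _ => zero_smul _ _]
  intro k hk
  simpa using hl hk

theorem integral_sum_smul_legendre_sq (s : Finset ℕ) (c : ℕ → ℝ) :
    ∫ x in (-1 : ℝ)..1, (∑ k ∈ s, c k • legendre k).eval x ^ 2 =
      ∑ k ∈ s, c k ^ 2 * (2 / (2 * k + 1)) := by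
  simp_rw [eval_finsetSum, eval_smul, smul_eq_mul, sq, sum_mul_sum, mul_mul_mul_comm]
  rw [integral_finsetSum fun j _ => Continuous.intervalIntegrable (by fun_prop) _ _]
  refine sum_congr rfl fun j hj => ?_
  rw [integral_finsetSum fun k _ => Continuous.intervalIntegrable (by fun_prop) _ _]
  simp_rw [integral_const_mul, integral_legendre_mul_legendre, mul_ite, mul_zero, sum_ite_eq,
    if_pos hj]

-- `∑ₖ Pₖ(t)² / ‖Pₖ‖²`: the reproducing kernel of polynomials of degree `≤ p` in `L²(-1, 1)`
-- on the diagonal.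
noncomputable def legendreKernel (p : ℕ) (t : ℝ) : ℝ :=
  ∑ k ∈ range (p + 1), (2 * k + 1) / 2 * (legendre k).eval t ^ 2

theorem eval_sq_le_integral_mul_legendreKernel {p : ℕ} {g : ℝ[X]} (hg : g.natDegree ≤ p)
    (t : ℝ) : g.eval t ^ 2 ≤ (∫ x in (-1 : ℝ)..1, g.eval x ^ 2) * legendreKernel p t := by
  obtain ⟨c, rfl⟩ := exists_eq_sum_smul_legendre hg
  rw [integral_sum_smul_legendre_sq, legendreKernel, eval_finsetSum]
  simp_rw [eval_smul, smul_eq_mul]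
  refine sum_sq_le_sum_mul_sum_of_sq_le_mul _ (fun k _ => by positivity)
    (fun k _ => by positivity) fun k _ => le_of_eq ?_
  field_simp

theorem choose_sq_le_choose_two_mul (n k : ℕ) : n.choose k ^ 2 ≤ (2 * n).choose (2 * k) := by
  rw [two_mul n, Nat.add_choose_eq, sq]
  exact single_le_sum (f := fun ij : ℕ × ℕ => n.choose ij.1 * n.choose ij.2)
    (fun _ _ => Nat.zero_le _) (show (k, k) ∈ antidiagonal (2 * k) by simp [two_mul])

theorem sum_choose_sq_mul_pow_le {R : Type*} [CommSemiring R] [PartialOrder R] [IsOrderedRing R]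
    (n : ℕ) {a b : R} (ha : 0 ≤ a) (hb : 0 ≤ b) :
    ∑ k ∈ range (n + 1), (n.choose k ^ 2 : R) * (a ^ (2 * k) * b ^ (2 * (n - k))) ≤
      (a + b) ^ (2 * n) := by
  calc ∑ k ∈ range (n + 1), (n.choose k ^ 2 : R) * (a ^ (2 * k) * b ^ (2 * (n - k)))
      ≤ ∑ k ∈ range (n + 1),
          a ^ (2 * k) * b ^ (2 * n - 2 * k) * ((2 * n).choose (2 * k) : R) := by
        refine sum_le_sum fun k _ => ?_
        rw [mul_comm, Nat.mul_sub]
        refine mul_le_mul_of_nonneg_left ?_ (by positivity)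
        rw [← Nat.cast_pow]
        exact Nat.mono_cast (choose_sq_le_choose_two_mul n k)
    _ = ∑ m ∈ (range (n + 1)).image (2 * ·),
          a ^ m * b ^ (2 * n - m) * ((2 * n).choose m : R) := by
        rw [sum_image fun _ _ _ _ h => by simpa using h]
    _ ≤ ∑ m ∈ range (2 * n + 1), a ^ m * b ^ (2 * n - m) * ((2 * n).choose m : R) := by
        refine sum_le_sum_of_subset_of_nonneg (fun m hm => ?_) fun _ _ _ => by positivity
        simp only [mem_image, mem_range] at hm ⊢
        omega
    _ = (a + b) ^ (2 * n) := (add_pow a b (2 * n)).symm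

theorem eval_legendre_nonneg (n : ℕ) {t : ℝ} (ht : 1 ≤ t) : 0 ≤ (legendre n).eval t := by
  rw [eval_legendre]
  have : 0 ≤ t - 1 := by linarith
  positivity

theorem eval_legendre_joukowski_le (n : ℕ) {s : ℝ} (hs : 1 ≤ s) :
    (legendre n).eval ((s + s⁻¹) / 2) ≤ s ^ n := by
  have hs0 : 0 < s := by linarith
  have hminus : ((s + s⁻¹) / 2 - 1) / 2 = (s - 1) ^ 2 / (4 * s) := by field_simp; ring
  have hplus : ((s + s⁻¹) / 2 + 1) / 2 = (s + 1) ^ 2 / (4 * s) := by field_simp; ring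
  have hterm : ∀ k ∈ range (n + 1), (n.choose k : ℝ) ^ 2 *
      (((s - 1) ^ 2 / (4 * s)) ^ k * ((s + 1) ^ 2 / (4 * s)) ^ (n - k)) =
      (n.choose k : ℝ) ^ 2 * ((s - 1) ^ (2 * k) * (s + 1) ^ (2 * (n - k))) / (4 * s) ^ n := by
    intro k hk
    have hk : k ≤ n := Nat.lt_succ_iff.mp (mem_range.mp hk)
    rw [← Nat.add_sub_cancel' hk, pow_add, Nat.add_sub_cancel_left, pow_mul, pow_mul, div_pow,
      div_pow]
    field_simp
  rw [eval_legendre, hminus, hplus, sum_congr rfl hterm, ← sum_div, div_le_iff₀ (by positivity)]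
  calc _ ≤ ((s - 1) + (s + 1)) ^ (2 * n) := sum_choose_sq_mul_pow_le n (by linarith) (by linarith)
    _ = s ^ n * (4 * s) ^ n := by rw [pow_mul, ← mul_pow]; ring

theorem sum_odd_mul_pow_succ_sub_pow_le (p : ℕ) {x : ℝ} (hx : 0 ≤ x) :
    ∑ k ∈ range (p + 1), (2 * k + 1) * (x ^ (k + 1) - x ^ k) ≤ (2 * p + 1) * x ^ (p + 1) := by
  induction p with
  | zero => simp
  | succ p ih =>
    rw [sum_range_succ]
    have : 0 ≤ x ^ (p + 1) := pow_nonneg hx _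
    push_cast
    linarith

theorem legendreKernel_joukowski_mul_le (p : ℕ) {s : ℝ} (hs : 1 ≤ s) :
    legendreKernel p ((s + s⁻¹) / 2) * ((1 - (s ^ 2)⁻¹) / 2) ≤
      (2 * p + 1) / 4 * s ^ (2 * p) := by
  have hs0 : 0 < s := by linarith
  have hx : 0 < s ^ 2 := by positivity
  have hderiv_nonneg : 0 ≤ (1 - (s ^ 2)⁻¹) / 2 := by
    have : (s ^ 2)⁻¹ ≤ 1 := inv_le_one_of_one_le₀ (one_le_pow₀ hs)
    linarith
  have hkernel : legendreKernel p ((s + s⁻¹) / 2) ≤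
      ∑ k ∈ range (p + 1), (2 * k + 1) / 2 * (s ^ 2) ^ k := by
    refine sum_le_sum fun k _ => mul_le_mul_of_nonneg_left ?_ (by positivity)
    rw [← pow_mul, mul_comm, pow_mul]
    have hmid : 1 ≤ (s + s⁻¹) / 2 := by
      have : 2 ≤ s + s⁻¹ := by
        rw [← sub_nonneg, show s + s⁻¹ - 2 = (s - 1) ^ 2 / s by field_simp; ring]
        positivity
      linarith
    exact pow_le_pow_left₀ (eval_legendre_nonneg k hmid) (eval_legendre_joukowski_le k hs) 2
  have htelescope :
      (∑ k ∈ range (p + 1), (2 * k + 1) / 2 * (s ^ 2) ^ k) * ((1 - (s ^ 2)⁻¹) / 2) =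
      (∑ k ∈ range (p + 1), (2 * k + 1) * ((s ^ 2) ^ (k + 1) - (s ^ 2) ^ k)) / (4 * s ^ 2) := by
    rw [sum_mul, sum_div]
    refine sum_congr rfl fun k _ => ?_
    field_simp
    ring
  calc _ ≤ (∑ k ∈ range (p + 1), (2 * k + 1) / 2 * (s ^ 2) ^ k) * ((1 - (s ^ 2)⁻¹) / 2) :=
        mul_le_mul_of_nonneg_right hkernel hderiv_nonneg
    _ ≤ (2 * p + 1) * (s ^ 2) ^ (p + 1) / (4 * s ^ 2) := by
        rw [htelescope]
        gcongr
        exact sum_odd_mul_pow_succ_sub_pow_le p hx.le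
    _ = (2 * p + 1) / 4 * s ^ (2 * p) := by
        rw [pow_succ, pow_mul]
        field_simp

theorem integral_legendreKernel_le (p : ℕ) {l : ℝ} (hl : 1 ≤ l) :
    ∫ t in (1 : ℝ)..l, legendreKernel p t ≤ ((l + √(l ^ 2 - 1)) ^ (2 * p + 1) - 1) / 4 := by
  set U := l + √(l ^ 2 - 1)
  have hroot : √(l ^ 2 - 1) ^ 2 = l ^ 2 - 1 := Real.sq_sqrt (by nlinarith)
  have hU1 : 1 ≤ U := le_add_of_le_of_nonneg hl (Real.sqrt_nonneg _)
  have hUinv : (U + U⁻¹) / 2 = l := by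
    have hU0 : U ≠ 0 := by positivity
    field_simp
    linear_combination hroot
  have hderiv : ∀ s ∈ Set.uIcc 1 U,
      HasDerivAt (fun s : ℝ => (s + s⁻¹) / 2) ((1 - (s ^ 2)⁻¹) / 2) s := by
    intro s hs
    have hs0 : s ≠ 0 := by
      rw [Set.uIcc_of_le hU1] at hs
      exact (zero_lt_one.trans_le hs.1).ne'
    exact (((hasDerivAt_id s).add (hasDerivAt_inv hs0)).div_const 2).congr_deriv (by simp; ring)
  have hcont : ContinuousOn (fun s : ℝ => (1 - (s ^ 2)⁻¹) / 2) (Set.uIcc 1 U) := by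
    refine ContinuousOn.div_const (continuousOn_const.sub (ContinuousOn.inv₀ (by fun_prop) ?_)) _
    intro s hs
    rw [Set.uIcc_of_le hU1] at hs
    exact (pow_pos (zero_lt_one.trans_le hs.1) 2).ne'
  have hK : Continuous (legendreKernel p) := by unfold legendreKernel; fun_prop
  have hsubst := integral_comp_mul_deriv hderiv hcont hK
  norm_num only [hUinv] at hsubst
  rw [← hsubst]
  calc _ ≤ ∫ s in (1 : ℝ)..U, (2 * p + 1) / 4 * s ^ (2 * p) := by
        refine integral_mono_on hU1 ?_ (Continuous.intervalIntegrable (by fun_prop) _ _)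
          fun s hs => legendreKernel_joukowski_mul_le p hs.1
        exact ((hK.comp_continuousOn fun s hs =>
          (hderiv s hs).continuousAt.continuousWithinAt).mul hcont).intervalIntegrable
    _ = (U ^ (2 * p + 1) - 1) / 4 := by
        rw [integral_const_mul, integral_pow]
        push_cast
        field_simp
        ring

theorem setIntegral_Ioo_diff_Icc {f : ℝ → ℝ} {a b c d : ℝ} (hab : a < b) (hbc : b ≤ c)
    (hcd : c < d) (hf : MeasureTheory.IntegrableOn f (Set.Icc a d)) :
    ∫ t in Set.Ioo a d \ Set.Icc b c, f t = (∫ t in a..b, f t) + ∫ t in c..d, f t := by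
  have hint : ∀ x ∈ Set.Icc a d, ∀ y ∈ Set.Icc a d,
      IntervalIntegrable f MeasureTheory.volume x y :=
    fun x hx y hy => (hf.mono_set (Set.uIcc_subset_Icc hx hy)).intervalIntegrable
  have ha : a ∈ Set.Icc a d := ⟨le_rfl, by linarith⟩
  have hb : b ∈ Set.Icc a d := ⟨hab.le, by linarith⟩
  have hc : c ∈ Set.Icc a d := ⟨by linarith, hcd.le⟩
  have hd : d ∈ Set.Icc a d := ⟨by linarith, le_rfl⟩
  rw [MeasureTheory.setIntegral_sdiff measurableSet_Icc (hf.mono_set Set.Ioo_subset_Icc_self)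
      (Set.Icc_subset_Ioo hab hcd), MeasureTheory.integral_Icc_eq_integral_Ioc,
    ← MeasureTheory.integral_Ioc_eq_integral_Ioo, ← integral_of_le (by linarith),
    ← integral_of_le hbc, ← integral_add_adjacent_intervals (hint a ha b hb) (hint b hb d hd),
    ← integral_add_adjacent_intervals (hint b hb c hc) (hint c hc d hd)]
  ring

theorem domain_inverse_estimate_right {p : ℕ} {l : ℝ} (hl : 1 ≤ l) {g : ℝ[X]}
    (hg : g.natDegree ≤ p) :
    ∫ t in (1 : ℝ)..l, g.eval t ^ 2 ≤
      (1 / 4) * ((l + √(l ^ 2 - 1)) ^ (2 * p + 1) - 1) *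
        ∫ t in (-1 : ℝ)..1, g.eval t ^ 2 := by
  set N := ∫ t in (-1 : ℝ)..1, g.eval t ^ 2
  have hN : 0 ≤ N := integral_nonneg (by norm_num) fun t _ => sq_nonneg _
  calc _ ≤ ∫ t in (1 : ℝ)..l, N * legendreKernel p t := by
        refine integral_mono_on hl (Continuous.intervalIntegrable (by fun_prop) _ _)
          (Continuous.intervalIntegrable ?_ _ _) fun t _ =>
            eval_sq_le_integral_mul_legendreKernel hg t
        unfold legendreKernel
        fun_prop
    _ ≤ N * (((l + √(l ^ 2 - 1)) ^ (2 * p + 1) - 1) / 4) := by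
        rw [integral_const_mul]
        exact mul_le_mul_of_nonneg_left (integral_legendreKernel_le p hl) hN
    _ = _ := by ring

/-- One-dimensional domain inverse estimate (Lemma 2.2): for `λ > 1` and any polynomial
`g` of degree at most `p`,
`∫_{(−λ,λ) \ [−1,1]} g² ≤ (1/2)[(λ + √(λ²−1))^{2p+1} − 1] ∫_{−1}^{1} g²`. -/
theorem domain_inverse_estimate_1d (p : ℕ) (l : ℝ) (hl : 1 < l)
    (g : Polynomial ℝ) (hg : g.natDegree ≤ p) :
    (∫ t in Set.Ioo (-l) l \ Set.Icc (-1 : ℝ) 1, (g.eval t) ^ 2) ≤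
      (1 / 2) * ((l + Real.sqrt (l ^ 2 - 1)) ^ (2 * p + 1) - 1) *
        ∫ t in (-1 : ℝ)..1, (g.eval t) ^ 2 := by
  have hreflect : ∀ a b : ℝ,
      ∫ t in a..b, (g.comp (-X)).eval t ^ 2 = ∫ t in -b..-a, g.eval t ^ 2 :=
    fun a b => by simpa using integral_comp_neg (fun t => g.eval t ^ 2)
  have hdeg : (g.comp (-X)).natDegree ≤ p := by simpa [natDegree_comp] using hg
  have hleft := domain_inverse_estimate_right hl.le hdeg
  have hright := domain_inverse_estimate_right hl.le hg
  rw [hreflect, hreflect, neg_neg] at hleft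
  rw [setIntegral_Ioo_diff_Icc (by linarith) (by norm_num) hl
    (Continuous.integrableOn_Icc (by fun_prop))]
  linarith
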